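/- arXiv:1402.2113 — 2 statements merged into one kernel-verified Lean document; each statement's English description precedes it below -/
import Mathlib

section
/- Let $X : [0,t] \to \mathbb{R}$ be a càdlàg function such that $\sum_{0 \le s \le t} (\Delta X_s)^2 = \infty$, where $\Delta X_s = X_s - X_{s-}$ denotes the jump of $X$ at $s$ (with $\Delta X_0 = 0$). Then for every sequence $(\mathcal{P}_n)_{n \in \mathbb{N}}$ of partitions $0 = \rho_0^{(n)} < \rho_1^{(n)} < \dots < \rho_{l^{(n)}}^{(n)} = t$ of $[0,t]$ whose mesh size tends to $0$, one has $\lim_{n \to \infty} \sum_{j=1}^{l^{(n)}} \big(X_{\rho_j^{(n)}} - X_{\rho_{j-1}^{(n)}}\big)^2 = \infty$. -/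
open Filter Topology

/-!
A jump at `u ∈ (0, t]` is seen by every fine partition: if `(ρ_j, ρ_{j+1}]` is the partition
interval containing `u`, then `ρ_j → u⁻` and `ρ_{j+1} → u⁺` as the mesh tends to zero, so by
right-continuity and the existence of left limits the increment `X ρ_{j+1} - X ρ_j` tends to
`ΔX_u`. The points of a finite set `G` of jump times eventually lie in distinct partition
intervals, so the sums of squared increments eventually exceed any number below
`∑_{u ∈ G} (ΔX_u)²`, and these finite sums are unbounded.
-/

theorem exists_finset_lt_sum_of_tsum_ofReal_eq_top {α : Type*} {g : α → ℝ}
    (hg : ∀ a, 0 ≤ g a) (h : ∑' a, ENNReal.ofReal (g a) = ⊤) (M : ℝ) :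
    ∃ s : Finset α, M < ∑ a ∈ s, g a := by
  have hM : ENNReal.ofReal M < ∑' a, ENNReal.ofReal (g a) := h ▸ ENNReal.ofReal_lt_top
  rw [ENNReal.tsum_eq_iSup_sum] at hM
  obtain ⟨s, hs⟩ := lt_iSup_iff.1 hM
  refine ⟨s, ?_⟩
  rw [← ENNReal.ofReal_sum_of_nonneg fun a _ => hg a] at hs
  exact (ENNReal.ofReal_lt_ofReal_iff'.1 hs).1

theorem tendsto_sq_sub_of_tendsto_nhdsLT_nhdsGE {α : Type*} {f : Filter α} {X : ℝ → ℝ}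
    {u xl : ℝ} (hright : Tendsto X (𝓝[≥] u) (𝓝 (X u))) (hleft : Tendsto X (𝓝[<] u) (𝓝 xl))
    {a b : α → ℝ} (ha : Tendsto a f (𝓝[<] u)) (hb : Tendsto b f (𝓝[≥] u)) :
    Tendsto (fun n => (X (b n) - X (a n)) ^ 2) f (𝓝 ((X u - xl) ^ 2)) :=
  ((hright.comp hb).sub (hleft.comp ha)).pow 2

theorem tendsto_nhdsLT_nhdsGE_of_tendsto_sub {α : Type*} {f : Filter α} {a b : α → ℝ} {u : ℝ}
    (ha : ∀ n, a n < u) (hb : ∀ n, u ≤ b n) (hab : Tendsto (fun n => b n - a n) f (𝓝 0)) :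
    Tendsto a f (𝓝[<] u) ∧ Tendsto b f (𝓝[≥] u) := by
  have hlower : Tendsto (fun n => u - (b n - a n)) f (𝓝 u) := by
    simpa using tendsto_const_nhds.sub hab
  have hupper : Tendsto (fun n => u + (b n - a n)) f (𝓝 u) := by
    simpa using tendsto_const_nhds.add hab
  refine ⟨tendsto_nhdsWithin_iff.2 ⟨?_, .of_forall ha⟩,
    tendsto_nhdsWithin_iff.2 ⟨?_, .of_forall hb⟩⟩
  · exact tendsto_of_tendsto_of_tendsto_of_le_of_le hlower tendsto_const_nhds
      (fun n => by linarith [hb n]) (fun n => (ha n).le)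
  · exact tendsto_of_tendsto_of_tendsto_of_le_of_le tendsto_const_nhds hupper
      hb (fun n => by linarith [ha n])

theorem sum_comp_le_sum_range_of_injOn {ι : Type*} {s : Finset ι} {e : ι → ℕ} {f : ℕ → ℝ} {L : ℕ}
    (hinj : Set.InjOn e s) (hlt : ∀ u ∈ s, e u < L) (hf : ∀ j, 0 ≤ f j) :
    ∑ u ∈ s, f (e u) ≤ ∑ j ∈ Finset.range L, f j := by
  rw [← Finset.sum_image hinj]
  refine Finset.sum_le_sum_of_subset_of_nonneg (fun j hj => ?_) fun j _ _ => hf j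
  obtain ⟨u, hu, rfl⟩ := Finset.mem_image.1 hj
  exact Finset.mem_range.2 (hlt u hu)

theorem exists_finset_Ioc_lt_sum_sq_jump {t : ℝ} {X Xl : ℝ → ℝ} (h0 : Xl 0 = X 0)
    (hjumps : ∑' u : Set.Icc (0 : ℝ) t, ENNReal.ofReal ((X u - Xl u) ^ 2) = ⊤) (M : ℝ) :
    ∃ G : Finset ℝ, (∀ u ∈ G, 0 < u ∧ u ≤ t) ∧ M < ∑ u ∈ G, (X u - Xl u) ^ 2 := by
  classical
  obtain ⟨F, hF⟩ := exists_finset_lt_sum_of_tsum_ofReal_eq_top (fun _ => sq_nonneg _) hjumps M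
  refine ⟨(F.map (.subtype _)).filter (0 < ·), fun u hu => ?_, ?_⟩
  · obtain ⟨hu, hpos⟩ := Finset.mem_filter.1 hu
    obtain ⟨v, -, rfl⟩ := Finset.mem_map.1 hu
    exact ⟨hpos, v.2.2⟩
  · rwa [Finset.sum_filter_of_ne, Finset.sum_map]
    rintro _ hu hne
    obtain ⟨v, -, rfl⟩ := Finset.mem_map.1 hu
    refine v.2.1.lt_of_ne fun h => hne ?_
    simp [← h, h0]

/-- The index `j` of the partition interval `(ρ j, ρ (j + 1)]` containing `u`. -/
noncomputable def straddleIndex (ρ : ℕ → ℝ) (u : ℝ) : ℕ :=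
  sInf {j | u ≤ ρ (j + 1)}

section straddleIndex

variable {ρ : ℕ → ℝ} {u : ℝ} {L : ℕ}

theorem exists_lt_le_succ (h0 : ρ 0 < u) (hL : u ≤ ρ L) : ∃ m < L, u ≤ ρ (m + 1) := by
  cases L with
  | zero => exact absurd hL (not_le.2 h0)
  | succ m => exact ⟨m, m.lt_succ_self, hL⟩

theorem straddleIndex_lt (h0 : ρ 0 < u) (hL : u ≤ ρ L) : straddleIndex ρ u < L :=
  have ⟨_, hmL, hm⟩ := exists_lt_le_succ h0 hL
  (Nat.sInf_le hm).trans_lt hmL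

theorem le_apply_straddleIndex_succ (h0 : ρ 0 < u) (hL : u ≤ ρ L) :
    u ≤ ρ (straddleIndex ρ u + 1) :=
  have ⟨m, _, hm⟩ := exists_lt_le_succ h0 hL
  Nat.sInf_mem (s := {j | u ≤ ρ (j + 1)}) ⟨m, hm⟩

theorem apply_straddleIndex_lt (h0 : ρ 0 < u) : ρ (straddleIndex ρ u) < u := by
  cases h : straddleIndex ρ u with
  | zero => exact h0
  | succ m =>
    exact not_le.1 (Nat.notMem_of_lt_sInf (s := {j | u ≤ ρ (j + 1)})
      (by unfold straddleIndex at h; omega))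

end straddleIndex

section Partitions

def MeshTendsToZero (l : ℕ → ℕ) (ρ : ℕ → ℕ → ℝ) : Prop :=
  ∀ ε > (0 : ℝ), ∃ N, ∀ n ≥ N, ∀ j < l n, ρ n (j + 1) - ρ n j < ε

variable {l : ℕ → ℕ} {ρ : ℕ → ℕ → ℝ} {u v : ℝ}

theorem tendsto_straddle_gap_zero
    (hmesh : MeshTendsToZero l ρ)
    (h0 : ∀ n, ρ n 0 < u) (hl : ∀ n, u ≤ ρ n (l n)) :
    Tendsto (fun n => ρ n (straddleIndex (ρ n) u + 1) - ρ n (straddleIndex (ρ n) u))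
      atTop (𝓝 0) := by
  refine tendsto_order.2 ⟨fun a ha => .of_forall fun n => ?_, fun ε hε => ?_⟩
  · linarith [apply_straddleIndex_lt (h0 n), le_apply_straddleIndex_succ (h0 n) (hl n)]
  · obtain ⟨N, hN⟩ := hmesh ε hε
    exact eventually_atTop.2 ⟨N, fun n hn => hN n hn _ (straddleIndex_lt (h0 n) (hl n))⟩

theorem tendsto_sq_straddle_increment {X : ℝ → ℝ} {xl : ℝ}
    (hright : Tendsto X (𝓝[≥] u) (𝓝 (X u))) (hleft : Tendsto X (𝓝[<] u) (𝓝 xl))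
    (hmesh : MeshTendsToZero l ρ)
    (h0 : ∀ n, ρ n 0 < u) (hl : ∀ n, u ≤ ρ n (l n)) :
    Tendsto (fun n => (X (ρ n (straddleIndex (ρ n) u + 1)) - X (ρ n (straddleIndex (ρ n) u))) ^ 2)
      atTop (𝓝 ((X u - xl) ^ 2)) :=
  have ⟨ha, hb⟩ := tendsto_nhdsLT_nhdsGE_of_tendsto_sub
    (fun n => apply_straddleIndex_lt (h0 n)) (fun n => le_apply_straddleIndex_succ (h0 n) (hl n))
    (tendsto_straddle_gap_zero hmesh h0 hl)
  tendsto_sq_sub_of_tendsto_nhdsLT_nhdsGE hright hleft ha hb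

theorem eventually_straddleIndex_ne
    (hmesh : MeshTendsToZero l ρ)
    (hu0 : ∀ n, ρ n 0 < u) (hul : ∀ n, u ≤ ρ n (l n))
    (hv0 : ∀ n, ρ n 0 < v) (hvl : ∀ n, v ≤ ρ n (l n)) (huv : u ≠ v) :
    ∀ᶠ n in atTop, straddleIndex (ρ n) u ≠ straddleIndex (ρ n) v := by
  obtain ⟨N, hN⟩ := hmesh |u - v| (abs_pos.2 (sub_ne_zero.2 huv))
  refine eventually_atTop.2 ⟨N, fun n hn heq => ?_⟩
  have hgap := hN n hn _ (straddleIndex_lt (hu0 n) (hul n))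
  have hu₁ := apply_straddleIndex_lt (hu0 n)
  have hu₂ := le_apply_straddleIndex_succ (hu0 n) (hul n)
  have hv₁ := apply_straddleIndex_lt (hv0 n)
  have hv₂ := le_apply_straddleIndex_succ (hv0 n) (hvl n)
  rw [← heq] at hv₁ hv₂
  have : |u - v| < |u - v| := (abs_sub_lt_iff.2 ⟨by linarith, by linarith⟩).trans hgap
  exact this.false

theorem eventually_injOn_straddleIndex {G : Finset ℝ} (hmesh : MeshTendsToZero l ρ)
    (h0 : ∀ u ∈ G, ∀ n, ρ n 0 < u) (hl : ∀ u ∈ G, ∀ n, u ≤ ρ n (l n)) :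
    ∀ᶠ n in atTop, Set.InjOn (straddleIndex (ρ n)) G := by
  have hpairs : ∀ᶠ n in atTop, ∀ p ∈ G ×ˢ G,
      straddleIndex (ρ n) p.1 = straddleIndex (ρ n) p.2 → p.1 = p.2 := by
    refine (Finset.eventually_all _).2 fun p hp => ?_
    obtain ⟨hp₁, hp₂⟩ := Finset.mem_product.1 hp
    by_cases huv : p.1 = p.2
    · exact .of_forall fun _ _ => huv
    · exact (eventually_straddleIndex_ne hmesh (h0 _ hp₁) (hl _ hp₁) (h0 _ hp₂) (hl _ hp₂)
        huv).mono fun _ hne heq => absurd heq hne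
  filter_upwards [hpairs] with n hn u hu v hv
  exact hn (u, v) (Finset.mem_product.2 ⟨hu, hv⟩)

end Partitions

theorem eventually_lt_sum_sq_increments {t M : ℝ} {X Xl : ℝ → ℝ} {l : ℕ → ℕ} {ρ : ℕ → ℕ → ℝ}
    (hright : ∀ u : ℝ, Tendsto X (𝓝[≥] u) (𝓝 (X u)))
    (hleft : ∀ u : ℝ, Tendsto X (𝓝[<] u) (𝓝 (Xl u)))
    (h0n : ∀ n, ρ n 0 = 0) (htn : ∀ n, ρ n (l n) = t)
    (hmesh : MeshTendsToZero l ρ)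
    {G : Finset ℝ} (hG : ∀ u ∈ G, 0 < u ∧ u ≤ t) (hM : M < ∑ u ∈ G, (X u - Xl u) ^ 2) :
    ∀ᶠ n in atTop, M < ∑ j ∈ Finset.range (l n), (X (ρ n (j + 1)) - X (ρ n j)) ^ 2 := by
  have h0 : ∀ u ∈ G, ∀ n, ρ n 0 < u := fun u hu n => h0n n ▸ (hG u hu).1
  have hl : ∀ u ∈ G, ∀ n, u ≤ ρ n (l n) := fun u hu n => htn n ▸ (hG u hu).2
  have hlim := tendsto_finsetSum G fun u hu =>
    tendsto_sq_straddle_increment (hright u) (hleft u) hmesh (h0 u hu) (hl u hu)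
  filter_upwards [hlim.eventually (eventually_gt_nhds hM),
    eventually_injOn_straddleIndex hmesh h0 hl] with n hlt hinj
  exact hlt.trans_le <| sum_comp_le_sum_range_of_injOn
    (f := fun j => (X (ρ n (j + 1)) - X (ρ n j)) ^ 2) hinj
    (fun u hu => straddleIndex_lt (h0 u hu n) (hl u hu n)) fun _ => sq_nonneg _

theorem infinite_squared_jumps_implies_infinite_quadratic_variation_general
    (t : ℝ) (X Xl : ℝ → ℝ)
    (hright : ∀ u : ℝ, Tendsto X (nhdsWithin u (Set.Ici u)) (nhds (X u)))
    (hleft : ∀ u : ℝ, Tendsto X (nhdsWithin u (Set.Iio u)) (nhds (Xl u)))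
    (h0 : Xl 0 = X 0)
    (hjumps : ∑' u : Set.Icc (0 : ℝ) t, ENNReal.ofReal ((X u - Xl u) ^ 2) = ⊤)
    (l : ℕ → ℕ) (ρ : ℕ → ℕ → ℝ)
    (h0n : ∀ n, ρ n 0 = 0) (htn : ∀ n, ρ n (l n) = t)
    (hmesh : ∀ ε > (0 : ℝ), ∃ N, ∀ n ≥ N, ∀ j < l n, ρ n (j + 1) - ρ n j < ε) :
    Tendsto (fun n => ∑ j ∈ Finset.range (l n), (X (ρ n (j + 1)) - X (ρ n j)) ^ 2)
      atTop atTop := by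
  refine tendsto_atTop.2 fun M => ?_
  obtain ⟨G, hG, hM⟩ := exists_finset_Ioc_lt_sum_sq_jump h0 hjumps M
  exact (eventually_lt_sum_sq_increments hright hleft h0n htn hmesh hG hM).mono fun _ h => h.le

/-- If a càdlàg function `X` on `[0,t]` has infinite sum of squared jumps, then along any
sequence of partitions of `[0,t]` with mesh tending to zero the sums of squared increments
tend to infinity. `Xl` denotes the left-limit function, with `Xl 0 = X 0` (so `ΔX_0 = 0`). -/
theorem infinite_squared_jumps_implies_infinite_quadratic_variation
    (t : ℝ) (ht : 0 < t) (X Xl : ℝ → ℝ)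
    (hright : ∀ u : ℝ, Tendsto X (nhdsWithin u (Set.Ici u)) (nhds (X u)))
    (hleft : ∀ u : ℝ, Tendsto X (nhdsWithin u (Set.Iio u)) (nhds (Xl u)))
    (h0 : Xl 0 = X 0)
    (hjumps : ∑' u : Set.Icc (0 : ℝ) t, ENNReal.ofReal ((X u - Xl u) ^ 2) = ⊤)
    (l : ℕ → ℕ) (ρ : ℕ → ℕ → ℝ)
    (hl : ∀ n, 1 ≤ l n)
    (h0n : ∀ n, ρ n 0 = 0) (htn : ∀ n, ρ n (l n) = t)
    (hmono : ∀ n, ∀ j < l n, ρ n j < ρ n (j + 1))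
    (hmesh : ∀ ε > (0 : ℝ), ∃ N, ∀ n ≥ N, ∀ j < l n, ρ n (j + 1) - ρ n j < ε) :
    Tendsto (fun n => ∑ j ∈ Finset.range (l n), (X (ρ n (j + 1)) - X (ρ n j)) ^ 2)
      atTop atTop :=
  infinite_squared_jumps_implies_infinite_quadratic_variation_general t X Xl hright hleft h0 hjumps
    l ρ h0n htn hmesh
end

section
/- Let $M_k$, $k \ge 2$, be independent random variables with $M_k$ Poisson distributed with parameter $(k-1)(t-s)$ for fixed $t > s$, and let $(T_{ik})_{i \ge 1, k \ge 2}$ be independent random variables, independent of $(M_k)$, where each $T_{ik}$ is distributed as the sum of independent exponentials with rates $\binom{j}{2}$, $j \ge k$. Then $\sum_{k=2}^{\infty} \sum_{i=1}^{M_k} T_{ik}^2 = \infty$ almost surely. -/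
/-!
Write `d = t - s` and `m_k = ⌊(k - 1) d / 4⌋`. Call line `i` of level `k` long if more than a
quarter of its first `k` holding times `X_{kij}` are at least `1 / (4 k²)`, so that
`T_{ik} ≥ 1 / (16 k)`, and call level `k` good if `M_k > m_k` and more than a quarter of its first
`m_k` lines are long, so that `∑_i T_{ik}² ≥ d / (8192 k)`.

A holding time of rate `C(k + j, 2) ≤ 2 k²` falls below `1 / (4 k²)` with probability at most
`1 / 2`. Markov's inequality for the number of failures then bounds the probability that a line is
not long by `2 / 3` and that the quarter condition fails by `8 / 9`, with no independence needed
between lines; with the Poisson tail `P(M_k ≤ m_k) ≤ exp (-(k - 1) d / 4)`, good levels have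
probability at least `1 / 18` for large `k`. Distinct levels are independent, so the variables
`d / (8192 k) 1_{level k good}` have non-summable means and summable variances, and Chebyshev's
inequality makes their sum diverge almost surely. Finally `E T_{ik} = ∑_{j ≥ k} 1 / C(j, 2) < ∞`,
so the life lengths are almost surely finite and the `tsum` defining them is a genuine sum.
-/

open MeasureTheory ProbabilityTheory Filter Topology Finset
open scoped NNReal

section SecondMoment

variable {Ω : Type*} [MeasurableSpace Ω] {μ : Measure Ω} [IsFiniteMeasure μ]

theorem ae_not_summable_of_pairwise_indepFun {Y : ℕ → Ω → ℝ} (hY : ∀ k, MemLp (Y k) 2 μ)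
    (hnonneg : ∀ k ω, 0 ≤ Y k ω) (hindep : Pairwise fun k l => Y k ⟂ᵢ[μ] Y l)
    (hvar : Summable fun k => Var[Y k; μ]) (hmean : ¬ Summable fun k => μ[Y k]) :
    ∀ᵐ ω ∂μ, ¬ Summable fun k => Y k ω := by
  set S : ℕ → Ω → ℝ := fun n => ∑ k ∈ range n, Y k
  have hS : ∀ n, MemLp (S n) 2 μ := fun n => memLp_finsetSum' _ fun k _ => hY k
  have hmeanS : Tendsto (fun n => μ[S n]) atTop atTop := by
    have hint : ∀ n, μ[S n] = ∑ k ∈ range n, μ[Y k] := fun n => by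
      simpa [S] using integral_finsetSum _ fun k _ => (hY k).integrable one_le_two
    simp_rw [hint]
    exact (not_summable_iff_tendsto_nat_atTop_of_nonneg
      fun k => integral_nonneg (hnonneg k)).mp hmean
  have hvarS : ∀ n, Var[S n; μ] ≤ ∑' k, Var[Y k; μ] := fun n => by
    rw [IndepFun.variance_sum (fun k _ => hY k) fun k _ l _ hkl => hindep hkl]
    exact hvar.sum_le_tsum _ fun k _ => variance_nonneg _ _
  -- Chebyshev at a time `n` with `E S_n ≥ N + r` bounds this by `(∑ Var Y_k) / r²` for all `r > 0`.
  have hbdd : ∀ N : ℝ, μ {ω | ∀ n, S n ω < N} = 0 := by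
    intro N
    have hlim : Tendsto (fun r : ℝ => ENNReal.ofReal ((∑' k, Var[Y k; μ]) / r ^ 2)) atTop
        (𝓝 0) := by
      simpa using ENNReal.tendsto_ofReal
        (tendsto_const_nhds.div_atTop (tendsto_pow_atTop two_ne_zero))
    refine le_antisymm (ge_of_tendsto hlim ?_) bot_le
    filter_upwards [eventually_gt_atTop 0] with r hr
    obtain ⟨n, hn⟩ := (hmeanS.eventually_ge_atTop (N + r)).exists
    calc μ {ω | ∀ n, S n ω < N} ≤ μ {ω | r ≤ |S n ω - μ[S n]|} :=
          measure_mono fun ω hω => by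
            rw [Set.mem_ofPred_eq, le_abs, neg_sub]
            exact Or.inr (by linarith [hω n])
      _ ≤ ENNReal.ofReal (Var[S n; μ] / r ^ 2) := meas_ge_le_variance_div_sq (hS n) hr
      _ ≤ _ := ENNReal.ofReal_le_ofReal (by gcongr; exact hvarS n)
  have hunbdd : ∀ᵐ ω ∂μ, ∀ N : ℕ, ∃ n, (N : ℝ) ≤ S n ω := by
    refine ae_all_iff.mpr fun N => ?_
    filter_upwards [measure_eq_zero_iff_ae_notMem.mp (hbdd N)] with ω hω
    simpa using hω
  filter_upwards [hunbdd] with ω hω hsum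
  obtain ⟨n, hn⟩ := hω (⌊∑' k, Y k ω⌋₊ + 1)
  have : S n ω ≤ ∑' k, Y k ω := by
    simpa [S] using hsum.sum_le_tsum (range n) fun k _ => hnonneg k ω
  push_cast at hn
  linarith [Nat.lt_floor_add_one (∑' k, Y k ω)]

theorem ae_not_summable_indicator [IsProbabilityMeasure μ] {F : ℕ → Set Ω}
    (hF : ∀ k, MeasurableSet (F k)) {a : ℕ → ℝ} (ha : ∀ k, 0 ≤ a k)
    (hindep : Pairwise fun k l => (F k).indicator (fun _ => a k) ⟂ᵢ[μ] (F l).indicator fun _ => a l)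
    (hsq : Summable fun k => a k ^ 2) (hmean : ¬ Summable fun k => a k * μ.real (F k)) :
    ∀ᵐ ω ∂μ, ¬ Summable fun k => (F k).indicator (fun _ => a k) ω := by
  refine ae_not_summable_of_pairwise_indepFun (fun k => (memLp_const (a k)).indicator (hF k))
    (fun k => Set.indicator_nonneg fun _ _ => ha k) hindep
    (hsq.of_nonneg_of_le (fun k => variance_nonneg _ _) fun k => ?_) ?_
  · calc Var[(F k).indicator fun _ => a k; μ] ≤ ((a k - 0) / 2) ^ 2 :=
          variance_le_sq_of_bounded (ae_of_all _ fun ω => ⟨Set.indicator_nonneg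
            (fun _ _ => ha k) ω, Set.indicator_le_self' (fun _ _ => ha k) ω⟩)
            (measurable_const.indicator (hF k)).aemeasurable
      _ ≤ a k ^ 2 := by nlinarith [ha k]
  · simpa [integral_indicator_const _ (hF _), mul_comm] using hmean

end SecondMoment

lemma tendsto_sum_Icc_atTop_of_not_summable (a : ℕ) {f : ℕ → ℝ} (hf : ∀ k, 0 ≤ f k)
    (hnot : ¬ Summable f) : Tendsto (fun n => ∑ k ∈ Icc a n, f k) atTop atTop := by
  have hrange := (not_summable_iff_tendsto_nat_atTop_of_nonneg hf).mp hnot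
  refine (tendsto_atTop_add_const_right _ (-∑ k ∈ range a, f k)
    (hrange.comp (tendsto_add_atTop_nat 1))).congr' ?_
  filter_upwards [eventually_ge_atTop a] with n hn
  rw [Function.comp_apply, ← Ico_add_one_right_eq_Icc, sum_Ico_eq_sub _ (by omega),
    sub_eq_add_neg]

lemma ae_summable_of_tsum_lintegral_ne_top {Ω : Type*} [MeasurableSpace Ω] {μ : Measure Ω}
    {Y : ℕ → Ω → ℝ} (hY : ∀ j, Measurable (Y j)) (hnonneg : ∀ᵐ ω ∂μ, ∀ j, 0 ≤ Y j ω)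
    (h : ∑' j, ∫⁻ ω, ENNReal.ofReal (Y j ω) ∂μ ≠ ⊤) :
    ∀ᵐ ω ∂μ, Summable fun j => Y j ω := by
  rw [← lintegral_tsum fun j => (hY j).ennreal_ofReal.aemeasurable] at h
  filter_upwards [ae_lt_top (Measurable.tsum fun j => (hY j).ennreal_ofReal) h, hnonneg]
    with ω hω hω'
  simpa [ENNReal.toReal_ofReal (hω' _)] using ENNReal.summable_toReal hω.ne

namespace ProbabilityTheory

theorem iIndepFun.pairwise_indepFun_of_measurable_iSup {Ω ι κ : Type*} [MeasurableSpace Ω]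
    {μ : Measure Ω} {β : ι → Type*} {mβ : ∀ i, MeasurableSpace (β i)} {f : ∀ i, Ω → β i}
    (hf : ∀ i, Measurable (f i)) (h : iIndepFun f μ) (level : ι → κ) {g : κ → Ω → ℝ}
    (hg : ∀ k, Measurable[⨆ i ∈ level ⁻¹' {k}, (mβ i).comap (f i)] (g k)) :
    Pairwise fun k l => g k ⟂ᵢ[μ] g l := by
  intro k l hkl
  rw [IndepFun_iff_Indep]
  refine indep_of_indep_of_le_left (indep_of_indep_of_le_right
    (indep_iSup_of_disjoint (fun i => (hf i).comap_le) ((iIndepFun_iff_iIndep _ _ _).mp h) ?_)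
    (hg l).comap_le) (hg k).comap_le
  exact Set.disjoint_singleton.mpr hkl |>.preimage level

lemma ae_nonneg_expMeasure (r : ℝ) : ∀ᵐ x ∂expMeasure r, 0 ≤ x := by
  have : {x : ℝ | ¬0 ≤ x} = Set.Iio 0 := by ext; simp
  rw [ae_iff, this, expMeasure, gammaMeasure, withDensity_apply _ measurableSet_Iio]
  exact lintegral_gammaPDF_of_nonpos le_rfl

lemma expMeasure_real_Iio_le {r x : ℝ} (hr : 0 < r) (hx : 0 ≤ x) :
    (expMeasure r).real (Set.Iio x) ≤ r * x := by
  have := isProbabilityMeasure_expMeasure hr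
  calc (expMeasure r).real (Set.Iio x) ≤ (expMeasure r).real (Set.Iic x) :=
        measureReal_mono Set.Iio_subset_Iic_self
    _ = 1 - Real.exp (-(r * x)) := by rw [← cdf_eq_real, cdf_expMeasure_eq hr, if_pos hx]
    _ ≤ r * x := by linarith [Real.add_one_le_exp (-(r * x))]

lemma expMeasure_Ioi {r x : ℝ} (hr : 0 < r) (hx : 0 ≤ x) :
    expMeasure r (Set.Ioi x) = ENNReal.ofReal (Real.exp (-(r * x))) := by
  have := isProbabilityMeasure_expMeasure hr
  rw [← ofReal_measureReal, ← Set.compl_Iic, probReal_compl_eq_one_sub measurableSet_Iic,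
    ← cdf_eq_real, cdf_expMeasure_eq hr, if_pos hx, sub_sub_cancel]

lemma lintegral_ofReal_expMeasure {r : ℝ} (hr : 0 < r) :
    ∫⁻ x, ENNReal.ofReal x ∂expMeasure r = ENNReal.ofReal r⁻¹ := by
  rw [lintegral_eq_lintegral_meas_lt _ (ae_nonneg_expMeasure r) aemeasurable_id]
  calc ∫⁻ t in Set.Ioi 0, expMeasure r {x | t < x}
      = ∫⁻ t in Set.Ioi 0, ENNReal.ofReal (Real.exp (-r * t)) :=
        setLIntegral_congr_fun measurableSet_Ioi fun t ht => by
          rw [neg_mul]; exact expMeasure_Ioi hr (le_of_lt ht)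
    _ = ENNReal.ofReal r⁻¹ := by
        rw [← ofReal_integral_eq_lintegral_ofReal (exp_neg_integrableOn_Ioi 0 hr)
          (ae_of_all _ fun t => (Real.exp_pos _).le), integral_exp_mul_Ioi (neg_neg_of_pos hr)]
        simp

lemma poissonMeasure_real_Iic_le (r : ℝ≥0) (m : ℕ) :
    (poissonMeasure r).real (Set.Iic m) ≤ 2 ^ m * Real.exp (-(r / 2)) := by
  have hIic : Set.Iic m = ↑(range (m + 1)) := by ext; simp
  rw [hIic, ← sum_measureReal_singleton]
  simp_rw [poissonMeasure_real_singleton]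
  -- `1_{n ≤ m} ≤ 2 ^ (m - n)` and `∑ₙ (r / 2) ^ n / n! ≤ exp (r / 2)`
  calc ∑ n ∈ range (m + 1), Real.exp (-r) * r ^ n / n.factorial
      = ∑ n ∈ range (m + 1), 2 ^ n * (Real.exp (-r) * ((r / 2 : ℝ) ^ n / n.factorial)) := by
        refine sum_congr rfl fun n _ => ?_
        rw [div_pow]; field_simp
    _ ≤ ∑ n ∈ range (m + 1), 2 ^ m * (Real.exp (-r) * ((r / 2 : ℝ) ^ n / n.factorial)) := by
        gcongr with n hn
        exacts [one_le_two, Nat.lt_succ_iff.mp (mem_range.mp hn)]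
    _ ≤ 2 ^ m * (Real.exp (-r) * Real.exp (r / 2)) := by
        rw [← mul_sum, ← mul_sum]
        gcongr
        exact Real.sum_le_exp_of_nonneg (by positivity) _
    _ = 2 ^ m * Real.exp (-(r / 2)) := by
        rw [← Real.exp_add]; ring_nf

end ProbabilityTheory

section MoreThanQuarter

variable {Ω ι : Type*}

open Classical in
def moreThanQuarter (s : Finset ι) (B : ι → Set Ω) : Set Ω :=
  {ω | #s < 4 * #{j ∈ s | ω ∈ B j}}

open Classical in
lemma mem_moreThanQuarter {s : Finset ι} {B : ι → Set Ω} {ω : Ω} :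
    ω ∈ moreThanQuarter s B ↔ #s < 4 * #{j ∈ s | ω ∈ B j} := Iff.rfl

lemma measurableSet_moreThanQuarter [MeasurableSpace Ω] {s : Finset ι} {B : ι → Set Ω}
    (hB : ∀ j ∈ s, MeasurableSet (B j)) : MeasurableSet (moreThanQuarter s B) := by
  classical
  have hcard : Measurable fun ω => #{j ∈ s | ω ∈ B j} := by
    simp_rw [card_filter]
    exact Finset.measurable_sum _ fun j hj =>
      Measurable.ite (hB j hj) measurable_const measurable_const
  exact hcard (MeasurableSet.of_discrete (s := {n | #s < 4 * n}))

lemma le_sum_of_mem_moreThanQuarter {s : Finset ι} {B : ι → Set Ω} {f : ι → ℝ} {c : ℝ} {ω : Ω}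
    (hω : ω ∈ moreThanQuarter s B) (hc : 0 ≤ c) (hf : ∀ j ∈ s, 0 ≤ f j)
    (hB : ∀ j ∈ s, ω ∈ B j → c ≤ f j) : #s / 4 * c ≤ ∑ j ∈ s, f j := by
  classical
  have hcard : (#s : ℝ) / 4 ≤ #{j ∈ s | ω ∈ B j} := by
    have := mem_moreThanQuarter.mp hω
    rw [div_le_iff₀ four_pos]
    exact_mod_cast (by omega : #s ≤ #{j ∈ s | ω ∈ B j} * 4)
  calc #s / 4 * c ≤ #{j ∈ s | ω ∈ B j} • c := by rw [nsmul_eq_mul]; gcongr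
    _ ≤ ∑ j ∈ s with ω ∈ B j, f j := card_nsmul_le_sum _ _ _ fun j hj => by
        rw [mem_filter] at hj; exact hB j hj.1 hj.2
    _ ≤ ∑ j ∈ s, f j := sum_le_sum_of_subset_of_nonneg (filter_subset _ _) fun j hj _ => hf j hj

lemma measureReal_compl_moreThanQuarter_le [MeasurableSpace Ω] {μ : Measure Ω}
    [IsFiniteMeasure μ] {s : Finset ι} (hs : s.Nonempty) {B : ι → Set Ω}
    (hB : ∀ j ∈ s, MeasurableSet (B j)) {q : ℝ} (hq : ∀ j ∈ s, μ.real (B j)ᶜ ≤ q) :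
    μ.real (moreThanQuarter s B)ᶜ ≤ 4 / 3 * q := by
  classical
  -- Markov's inequality for the number `N` of indices `j` with `ω ∉ B j`.
  set N : Ω → ℝ := fun ω => ∑ j ∈ s, (B j)ᶜ.indicator 1 ω
  have hN : ∀ ω, N ω = #{j ∈ s | ω ∉ B j} := fun ω => by
    simp only [N, Set.indicator_apply, Set.mem_compl_iff, Pi.one_apply]
    rw [sum_boole]
  have hint : ∀ j ∈ s, Integrable ((B j)ᶜ.indicator (1 : Ω → ℝ)) μ := fun j hj =>
    (integrable_const 1).indicator (hB j hj).compl
  have hsub : (moreThanQuarter s B)ᶜ ⊆ {ω | 3 * #s / 4 ≤ N ω} := fun ω hω => by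
    have hsplit := card_filter_add_card_filter_not (s := s) (fun j => ω ∈ B j)
    have := mt mem_moreThanQuarter.mpr hω
    rw [Set.mem_ofPred_eq, hN, div_le_iff₀ four_pos]
    exact_mod_cast (by omega : 3 * #s ≤ #{j ∈ s | ω ∉ B j} * 4)
  have hmarkov := mul_meas_ge_le_integral_of_nonneg
    (ae_of_all _ fun ω => show 0 ≤ N ω by rw [hN]; positivity)
    (integrable_finsetSum _ hint) (3 * #s / 4 : ℝ)
  have hmean : ∫ ω, N ω ∂μ ≤ #s * q :=
    calc ∫ ω, N ω ∂μ = ∑ j ∈ s, μ.real (B j)ᶜ := by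
          rw [integral_finsetSum _ hint]
          exact sum_congr rfl fun j hj => integral_indicator_one (hB j hj).compl
      _ ≤ #s * q := by simpa using sum_le_card_nsmul s _ q hq
  have hs0 : (0 : ℝ) < #s := by exact_mod_cast hs.card_pos
  have := measureReal_mono hsub (μ := μ)
  nlinarith

end MoreThanQuarter

lemma summable_inv_choose_two : Summable fun n : ℕ => ((n.choose 2 : ℕ) : ℝ)⁻¹ := by
  refine ((Real.summable_nat_pow_inv.mpr one_lt_two).mul_left 4).of_nonneg_of_le
    (fun n => by positivity) fun n => ?_
  rcases lt_or_ge n 2 with hn | hn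
  · simp [Nat.choose_eq_zero_of_lt hn]
  · have hn' : (2 : ℝ) ≤ n := by exact_mod_cast hn
    rw [Nat.cast_choose_two, inv_div, div_le_iff₀ (by nlinarith)]
    field_simp
    nlinarith

lemma choose_two_le_two_mul_sq {k j : ℕ} (hj : j ≤ k) :
    (((k + j).choose 2 : ℕ) : ℝ) ≤ 2 * k ^ 2 := by
  have hkj : ((k + j : ℕ) : ℝ) ≤ 2 * k := by exact_mod_cast (by omega : k + j ≤ 2 * k)
  calc _ ≤ ((k + j : ℕ) : ℝ) ^ 2 / 2 := by simpa using Nat.choose_le_pow_div (α := ℝ) 2 (k + j)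
    _ ≤ (2 * k) ^ 2 / 2 := by gcongr
    _ = 2 * k ^ 2 := by ring

section LookDown

variable {Ω : Type*} {M : ℕ → Ω → ℕ} {X : ℕ → ℕ → ℕ → Ω → ℝ} {d : ℝ} {k : ℕ}

noncomputable def lifeLength (X : ℕ → ℕ → ℕ → Ω → ℝ) (k i : ℕ) (ω : Ω) : ℝ := ∑' j, X k i j ω

def longLine (X : ℕ → ℕ → ℕ → Ω → ℝ) (k i : ℕ) : Set Ω :=
  moreThanQuarter (range k) fun j => {ω | (4 * k ^ 2 : ℝ)⁻¹ ≤ X k i j ω}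

noncomputable def levelSize (d : ℝ) (k : ℕ) : ℕ := ⌊(k - 1 : ℝ) * d / 4⌋₊

def goodLevel (M : ℕ → Ω → ℕ) (X : ℕ → ℕ → ℕ → Ω → ℝ) (d : ℝ) (k : ℕ) : Set Ω :=
  {ω | levelSize d k < M k ω} ∩ moreThanQuarter (range (levelSize d k)) (longLine X k)

lemma measurableSet_longLine [MeasurableSpace Ω] {i : ℕ} (hX : ∀ j, Measurable (X k i j)) :
    MeasurableSet (longLine X k i) :=
  measurableSet_moreThanQuarter fun j _ => hX j measurableSet_Ici

lemma measurableSet_goodLevel {mΩ : MeasurableSpace Ω} (hM : Measurable (M k))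
    (hX : ∀ i j, Measurable (X k i j)) : MeasurableSet (goodLevel M X d k) :=
  (hM (MeasurableSet.of_discrete (s := Set.Ioi (levelSize d k)))).inter
    (measurableSet_moreThanQuarter fun i _ => measurableSet_longLine (hX i))

lemma measureReal_compl_longLine_le [MeasurableSpace Ω] {μ : Measure Ω} [IsFiniteMeasure μ]
    {i : ℕ} (hX : ∀ j, Measurable (X k i j))
    (hXdist : ∀ j, μ.map (X k i j) = expMeasure ((k + j).choose 2)) (hk : 2 ≤ k) :
    μ.real (longLine X k i)ᶜ ≤ 2 / 3 := by
  have hk0 : (0 : ℝ) < k := by positivity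
  have hline : ∀ j ∈ range k, μ.real {ω | (4 * k ^ 2 : ℝ)⁻¹ ≤ X k i j ω}ᶜ ≤ 1 / 2 := by
    intro j hj
    have hr : (0 : ℝ) < ((k + j).choose 2 : ℕ) := by exact_mod_cast Nat.choose_pos (by omega)
    calc μ.real {ω | (4 * k ^ 2 : ℝ)⁻¹ ≤ X k i j ω}ᶜ
        = (expMeasure ((k + j).choose 2)).real (Set.Iio (4 * k ^ 2 : ℝ)⁻¹) := by
          rw [← hXdist j, map_measureReal_apply (hX j) measurableSet_Iio]
          congr 1; ext; simp
      _ ≤ ((k + j).choose 2 : ℕ) * (4 * k ^ 2 : ℝ)⁻¹ := expMeasure_real_Iio_le hr (by positivity)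
      _ ≤ 2 * k ^ 2 * (4 * k ^ 2 : ℝ)⁻¹ := by
          gcongr; exact choose_two_le_two_mul_sq (mem_range.mp hj).le
      _ = 1 / 2 := by field_simp; norm_num
  calc μ.real (longLine X k i)ᶜ ≤ 4 / 3 * (1 / 2) :=
        measureReal_compl_moreThanQuarter_le (nonempty_range_iff.mpr (by omega))
          (fun j _ => hX j measurableSet_Ici) hline
    _ = 2 / 3 := by norm_num

lemma measureReal_le_levelSize_le [MeasurableSpace Ω] {μ : Measure Ω} (hM : Measurable (M k))
    (hMdist : μ.map (M k) = poissonMeasure (((k : ℝ) - 1) * d).toNNReal) (hd : 0 ≤ d)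
    (hk : 1 ≤ k) :
    μ.real {ω | M k ω ≤ levelSize d k} ≤ Real.exp (-(((k : ℝ) - 1) * d / 4)) := by
  have hrate : 0 ≤ ((k : ℝ) - 1) * d := mul_nonneg (by simpa using hk) hd
  have hm : (levelSize d k : ℝ) ≤ ((k : ℝ) - 1) * d / 4 := Nat.floor_le (by positivity)
  have h2 : (2 : ℝ) ^ levelSize d k ≤ Real.exp (((k : ℝ) - 1) * d / 4) :=
    calc (2 : ℝ) ^ levelSize d k ≤ Real.exp 1 ^ levelSize d k := by
          gcongr; linarith [Real.add_one_le_exp 1]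
      _ ≤ _ := by rw [← Real.exp_nat_mul, mul_one]; exact Real.exp_le_exp.mpr hm
  calc μ.real {ω | M k ω ≤ levelSize d k}
      = (poissonMeasure (((k : ℝ) - 1) * d).toNNReal).real (Set.Iic (levelSize d k)) := by
        rw [← hMdist, map_measureReal_apply hM measurableSet_Iic]; rfl
    _ ≤ 2 ^ levelSize d k * Real.exp (-((((k : ℝ) - 1) * d).toNNReal / 2)) :=
        poissonMeasure_real_Iic_le _ _
    _ ≤ Real.exp (((k : ℝ) - 1) * d / 4) * Real.exp (-(((k : ℝ) - 1) * d / 2)) := by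
        rw [Real.coe_toNNReal _ hrate]; gcongr
    _ = Real.exp (-(((k : ℝ) - 1) * d / 4)) := by rw [← Real.exp_add]; ring_nf

lemma eventually_mul_le_levelSize (hd : 0 < d) :
    ∀ᶠ k : ℕ in atTop, k * d / 8 ≤ levelSize d k := by
  filter_upwards [tendsto_natCast_atTop_atTop.eventually_ge_atTop (2 + 8 / d)] with k hk
  have := Nat.sub_one_lt_floor (((k : ℝ) - 1) * d / 4)
  have : 8 / d * d = 8 := div_mul_cancel₀ 8 hd.ne'
  rw [levelSize]
  nlinarith

lemma eventually_le_measureReal_goodLevel [MeasurableSpace Ω] {μ : Measure Ω}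
    [IsProbabilityMeasure μ] (hM : ∀ k, Measurable (M k)) (hX : ∀ k i j, Measurable (X k i j))
    (hMdist : ∀ k, 2 ≤ k → μ.map (M k) = poissonMeasure (((k : ℝ) - 1) * d).toNNReal)
    (hXdist : ∀ k, 2 ≤ k → ∀ i j, μ.map (X k i j) = expMeasure ((k + j).choose 2))
    (hd : 0 < d) : ∀ᶠ k in atTop, 1 / 18 ≤ μ.real (goodLevel M X d k) := by
  have hrate : Tendsto (fun k : ℕ => ((k : ℝ) - 1) * d / 4) atTop atTop := by
    simpa [sub_eq_add_neg] using ((tendsto_atTop_add_const_right _ (-1)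
      tendsto_natCast_atTop_atTop).atTop_mul_const hd).atTop_div_const four_pos
  filter_upwards [(Real.tendsto_exp_neg_atTop_nhds_zero.comp hrate).eventually
      (ge_mem_nhds (by norm_num : (0 : ℝ) < 1 / 18)), eventually_mul_le_levelSize hd,
    tendsto_natCast_atTop_atTop.eventually_ge_atTop (8 / d), eventually_ge_atTop 2]
    with k hsmall hm hk8 hk2
  have hm0 : levelSize d k ≠ 0 := by
    have : (8 / d) * d = 8 := div_mul_cancel₀ 8 hd.ne'
    have : (1 : ℝ) ≤ levelSize d k := by nlinarith
    exact_mod_cast (by positivity : (0 : ℝ) < levelSize d k).ne'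
  set C := moreThanQuarter (range (levelSize d k)) (longLine X k)
  have hC : μ.real Cᶜ ≤ 4 / 3 * (2 / 3) :=
    measureReal_compl_moreThanQuarter_le (nonempty_range_iff.mpr hm0)
      (fun i _ => measurableSet_longLine (hX k i))
      fun i _ => measureReal_compl_longLine_le (hX k i) (hXdist k hk2 i) hk2
  have hA := measureReal_le_levelSize_le (hM k) (hMdist k hk2) hd.le (by omega)
  have hsplit : μ.real C ≤ μ.real (goodLevel M X d k) + μ.real {ω | M k ω ≤ levelSize d k} :=
    (measureReal_mono fun ω hω => by
      by_cases h : levelSize d k < M k ω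
      exacts [Or.inl ⟨h, hω⟩, Or.inr (not_lt.mp h)]).trans (measureReal_union_le _ _)
  rw [probReal_compl_eq_one_sub (measurableSet_moreThanQuarter
    fun i _ => measurableSet_longLine (hX k i))] at hC
  simp only [Function.comp_apply] at hsmall
  linarith

lemma div_le_sum_sq_of_mem_goodLevel {ω : Ω} (hω : ω ∈ goodLevel M X d k) (hk : 1 ≤ k)
    (hm : k * d / 8 ≤ levelSize d k) (hnonneg : ∀ i j, 0 ≤ X k i j ω)
    (hsum : ∀ i, Summable fun j => X k i j ω) :
    d / (8192 * k) ≤ ∑ i ∈ range (M k ω), lifeLength X k i ω ^ 2 := by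
  obtain ⟨hM, hC⟩ := hω
  have hk0 : (0 : ℝ) < k := by exact_mod_cast hk
  have hline : ∀ i, ω ∈ longLine X k i → (16 * k : ℝ)⁻¹ ≤ lifeLength X k i ω := fun i hi =>
    calc (16 * k : ℝ)⁻¹ = #(range k) / 4 * (4 * k ^ 2 : ℝ)⁻¹ := by
          rw [card_range]; field_simp; ring
      _ ≤ ∑ j ∈ range k, X k i j ω := le_sum_of_mem_moreThanQuarter hi (by positivity)
          (fun j _ => hnonneg i j) fun j _ hj => hj
      _ ≤ lifeLength X k i ω := (hsum i).sum_le_tsum _ fun j _ => hnonneg i j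
  calc d / (8192 * k) ≤ #(range (levelSize d k)) / 4 * ((16 * k : ℝ)⁻¹) ^ 2 := by
        rw [card_range, div_le_iff₀ (by positivity)]
        field_simp
        nlinarith
    _ ≤ ∑ i ∈ range (levelSize d k), lifeLength X k i ω ^ 2 :=
        le_sum_of_mem_moreThanQuarter hC (by positivity) (fun i _ => sq_nonneg _)
          fun i _ hi => pow_le_pow_left₀ (by positivity) (hline i hi) 2
    _ ≤ ∑ i ∈ range (M k ω), lifeLength X k i ω ^ 2 :=
        sum_le_sum_of_subset_of_nonneg (range_subset_range.mpr hM.le) fun i _ _ => sq_nonneg _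

lemma ae_nonneg_summable_of_map_eq_expMeasure [MeasurableSpace Ω] {μ : Measure Ω}
    (hX : ∀ k i j, Measurable (X k i j))
    (hXdist : ∀ k, 2 ≤ k → ∀ i j, μ.map (X k i j) = expMeasure ((k + j).choose 2)) :
    ∀ᵐ ω ∂μ, ∀ k, 2 ≤ k → ∀ i, (∀ j, 0 ≤ X k i j ω) ∧ Summable fun j => X k i j ω := by
  refine ae_all_iff.mpr fun k => ?_
  by_cases hk : 2 ≤ k
  swap
  · exact ae_of_all _ fun ω h => absurd h hk
  have hnonneg : ∀ i, ∀ᵐ ω ∂μ, ∀ j, 0 ≤ X k i j ω := fun i => ae_all_iff.mpr fun j =>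
    ae_of_ae_map (hX k i j).aemeasurable (hXdist k hk i j ▸ ae_nonneg_expMeasure _)
  have hmean : ∀ i j, ∫⁻ ω, ENNReal.ofReal (X k i j ω) ∂μ
      = ENNReal.ofReal ((((k + j).choose 2 : ℕ) : ℝ)⁻¹) := fun i j => by
    rw [← lintegral_map ENNReal.measurable_ofReal (hX k i j), hXdist k hk i j,
      lintegral_ofReal_expMeasure (by exact_mod_cast Nat.choose_pos (by omega))]
  have hsummable : Summable fun j => (((k + j).choose 2 : ℕ) : ℝ)⁻¹ := by
    simpa [add_comm] using (summable_nat_add_iff k).mpr summable_inv_choose_two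
  have hsum : ∀ i, ∀ᵐ ω ∂μ, Summable fun j => X k i j ω := fun i =>
    ae_summable_of_tsum_lintegral_ne_top (hX k i) (hnonneg i) <| by
      simp_rw [hmean i, ← ENNReal.ofReal_tsum_of_nonneg (fun j => by positivity) hsummable]
      exact ENNReal.ofReal_ne_top
  filter_upwards [ae_all_iff.mpr hnonneg, ae_all_iff.mpr hsum] with ω h h' _ i using ⟨h i, h' i⟩

lemma ae_not_summable_sum_sq_lifeLength [MeasurableSpace Ω] {μ : Measure Ω}
    [IsProbabilityMeasure μ] (hM : ∀ k, Measurable (M k)) (hX : ∀ k i j, Measurable (X k i j))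
    (hindep : iIndepFun
      (m := fun a : ℕ ⊕ ℕ × ℕ × ℕ =>
        Sum.rec (motive := fun a => MeasurableSpace (Sum.elim (fun _ => ℕ) (fun _ => ℝ) a))
          (fun _ => inferInstanceAs (MeasurableSpace ℕ))
          (fun _ => inferInstanceAs (MeasurableSpace ℝ)) a)
      (fun a : ℕ ⊕ ℕ × ℕ × ℕ =>
        Sum.rec (motive := fun a => Ω → Sum.elim (fun _ => ℕ) (fun _ => ℝ) a)
          (fun k => M k) (fun p => X p.1 p.2.1 p.2.2) a) μ)
    (hMdist : ∀ k, 2 ≤ k → μ.map (M k) = poissonMeasure (((k : ℝ) - 1) * d).toNNReal)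
    (hXdist : ∀ k, 2 ≤ k → ∀ i j, μ.map (X k i j) = expMeasure ((k + j).choose 2))
    (hd : 0 < d) :
    ∀ᵐ ω ∂μ, ¬ Summable fun k => ∑ i ∈ range (M k ω), lifeLength X k i ω ^ 2 := by
  set a : ℕ → ℝ := fun k => d / (8192 * k)
  have ha : ∀ k, 0 ≤ a k := fun k => by positivity
  have hmeas : ∀ k, MeasurableSet (goodLevel M X d k) := fun k =>
    measurableSet_goodLevel (hM k) (hX k)
  have hindepLevels : Pairwise fun k l => (goodLevel M X d k).indicator (fun _ => a k) ⟂ᵢ[μ]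
      (goodLevel M X d l).indicator fun _ => a l :=
    hindep.pairwise_indepFun_of_measurable_iSup (by rintro (k | p); exacts [hM k, hX _ _ _])
      (Sum.elim id Prod.fst) fun k => measurable_const.indicator <| measurableSet_goodLevel
        (measurable_iff_comap_le.mpr (le_iSup₂_of_le (Sum.inl k) rfl le_rfl))
        fun i j => measurable_iff_comap_le.mpr (le_iSup₂_of_le (Sum.inr (k, i, j)) rfl le_rfl)
  have hsq : Summable fun k => a k ^ 2 :=
    ((Real.summable_nat_pow_inv.mpr one_lt_two).mul_left ((d / 8192) ^ 2)).congr fun k => by ring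
  have hmean : ¬ Summable fun k => a k * μ.real (goodLevel M X d k) := fun hsum => by
    refine Real.not_summable_natCast_inv ((summable_mul_left_iff (a := d / 8192 / 18)
      (by positivity)).mp (hsum.of_norm_bounded_eventually_nat ?_))
    filter_upwards [eventually_le_measureReal_goodLevel hM hX hMdist hXdist hd] with k hk
    rw [Real.norm_of_nonneg (by positivity)]
    calc d / 8192 / 18 * (k : ℝ)⁻¹ = a k * (1 / 18) := by ring
      _ ≤ a k * μ.real (goodLevel M X d k) := mul_le_mul_of_nonneg_left hk (ha k)
  filter_upwards [ae_not_summable_indicator hmeas ha hindepLevels hsq hmean,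
    ae_nonneg_summable_of_map_eq_expMeasure hX hXdist] with ω hnot hXω hsum
  refine hnot (Summable.of_norm_bounded_eventually_nat hsum ?_)
  filter_upwards [eventually_mul_le_levelSize hd, eventually_ge_atTop 2] with k hm hk
  rw [Real.norm_of_nonneg (Set.indicator_nonneg (fun _ _ => ha k) ω)]
  by_cases hω : ω ∈ goodLevel M X d k
  · rw [Set.indicator_of_mem hω]
    exact div_le_sum_sq_of_mem_goodLevel hω (by omega) hm (fun i => (hXω k hk i).1)
      fun i => (hXω k hk i).2
  · rw [Set.indicator_of_notMem hω]
    exact sum_nonneg fun i _ => sq_nonneg _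

end LookDown

/-- Theorem 1 (core): with `M_k` independent Poisson of parameter `(k-1)(t-s)` and
`T_{ik} = ∑_{j≥0} X_{k,i,j}` sums of independent exponentials of rates `C(k+j,2)`, all the
variables being mutually independent, the sum `∑_{k≥2} ∑_{i<M_k} T_{ik}²` is a.s. infinite. -/
theorem sum_squared_life_lengths_infinite {Ω : Type*} [MeasurableSpace Ω]
    (μ : Measure Ω) [IsProbabilityMeasure μ]
    (s t : ℝ) (hst : s < t)
    (M : ℕ → Ω → ℕ) (X : ℕ → ℕ → ℕ → Ω → ℝ)
    (hMmeas : ∀ k, Measurable (M k)) (hXmeas : ∀ k i j, Measurable (X k i j))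
    (hindep : iIndepFun
      (m := fun a : ℕ ⊕ ℕ × ℕ × ℕ =>
        Sum.rec (motive := fun a => MeasurableSpace (Sum.elim (fun _ => ℕ) (fun _ => ℝ) a))
          (fun _ => inferInstanceAs (MeasurableSpace ℕ)) (fun _ => inferInstanceAs (MeasurableSpace ℝ)) a)
      (fun a : ℕ ⊕ ℕ × ℕ × ℕ =>
        Sum.rec (motive := fun a => Ω → Sum.elim (fun _ => ℕ) (fun _ => ℝ) a)
          (fun k => M k) (fun p => X p.1 p.2.1 p.2.2) a) μ)
    (hMdist : ∀ k, 2 ≤ k →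
      Measure.map (M k) μ = poissonMeasure (((k : ℝ) - 1) * (t - s)).toNNReal)
    (hXdist : ∀ k, 2 ≤ k → ∀ i j,
      Measure.map (X k i j) μ = expMeasure ((k + j).choose 2)) :
    ∀ᵐ ω ∂μ, Tendsto
      (fun n => ∑ k ∈ Finset.Icc 2 n,
        ∑ i ∈ Finset.range (M k ω), (∑' j : ℕ, X k i j ω) ^ 2) atTop atTop := by
  filter_upwards [ae_not_summable_sum_sq_lifeLength hMmeas hXmeas hindep hMdist hXdist
    (sub_pos.mpr hst)] with ω hω
  exact tendsto_sum_Icc_atTop_of_not_summable 2 (fun k => sum_nonneg fun i _ => sq_nonneg _) hω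
end
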